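/- Existence of a local minimum solution for small positive λ: let c < 0 and let h : V → ℝ satisfy h ≢ 0 and max_{x∈V} h(x) = 0. Then there exists λ₀ > 0 such that for every λ ∈ (0, λ₀) the functional J_λ has a local minimum point u_λ (with respect to the sup norm on functions V → ℝ); in particular u_λ satisfies L u_λ = (h + λ) e^{2u_λ} − c on V. -/

import Mathlib

/-!
Since `h ≤ 0`, `h ≢ 0` and `c < 0`, the functional `J_0` grows at least linearly in `‖u‖_∞`:
with `m = max u` and `n = min u`, the Dirichlet term dominates `(m - n)²`, the exponential term
dominates `e^{2n}` and `c ∫ u ≥ c μ(V) m`. Take `R` with `J_0 ≥ J_0(0) + 1` on the sphere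
`‖u‖_∞ = R`. As `J_λ = J_0 - (λ/2) ∫ e^{2u}` and the perturbation is at most `(λ/2) μ(V) e^{2R}`
there, for small `λ > 0` we still have `J_λ(0) < J_λ` on that sphere, so the minimum of `J_λ` on
the closed ball is attained inside it: a local minimum, where the directional derivatives of
`J_λ` vanish.
-/

open Finset Real

lemma mul_sub_log_add_one_le_exp {a : ℝ} (ha : 0 < a) (t : ℝ) : a * (t - log a + 1) ≤ exp t :=
  calc a * (t - log a + 1) ≤ a * exp (t - log a) := by gcongr; exact add_one_le_exp _
    _ = exp t := by rw [exp_sub, exp_log ha]; field_simp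

lemma exists_mul_abs_sub_le_mul_exp_sub {β k : ℝ} (hβ : 0 < β) (hk : 0 < k) :
    ∃ C, ∀ t, k * |t| - C ≤ β * exp (2 * t) - k * t := by
  refine ⟨|k * (log (k / β) - 1)|, fun t => ?_⟩
  have htan : k * (2 * t - log (k / β) + 1) ≤ β * exp (2 * t) := by
    have := mul_sub_log_add_one_le_exp (div_pos hk hβ) (2 * t)
    rwa [div_mul_eq_mul_div, div_le_iff₀ hβ, mul_comm (exp _)] at this
  rcases abs_cases t with ⟨ht, -⟩ | ⟨ht, -⟩ <;> rw [ht] <;>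
    linarith [le_abs_self (k * (log (k / β) - 1)), abs_nonneg (k * (log (k / β) - 1)),
      mul_pos hβ (exp_pos (2 * t))]

lemma hasDerivAt_add_smul_apply {V : Type*} (u s : V → ℝ) (x : V) :
    HasDerivAt (fun t : ℝ => (u + t • s) x) (s x) 0 := by
  simpa using ((hasDerivAt_id (0 : ℝ)).mul_const (s x)).const_add (u x)

noncomputable section

variable {V : Type*} [Fintype V]

lemma sum_exp_mul_le {μ : V → ℝ} (hμ : ∀ x, 0 ≤ μ x) (u : V → ℝ) :
    ∑ x, exp (2 * u x) * μ x ≤ exp (2 * ‖u‖) * ∑ x, μ x := by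
  rw [mul_sum]
  gcongr with x
  · exact hμ x
  · exact (le_abs_self _).trans (norm_le_pi_norm u x)

lemma mul_exp_le_neg_sum_mul_exp {μ h : V → ℝ} (hμ : ∀ x, 0 ≤ μ x) (hh : ∀ x, h x ≤ 0)
    (u : V → ℝ) {x₁ : V} {t : ℝ} (ht : t ≤ u x₁) :
    -h x₁ * μ x₁ * exp (2 * t) ≤ -∑ x, h x * exp (2 * u x) * μ x :=
  calc -h x₁ * μ x₁ * exp (2 * t) ≤ -h x₁ * exp (2 * u x₁) * μ x₁ := by
        rw [mul_right_comm]
        have := neg_nonneg.2 (hh x₁)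
        have := hμ x₁
        gcongr
    _ ≤ ∑ x, -h x * exp (2 * u x) * μ x :=
      single_le_sum (f := fun x => -h x * exp (2 * u x) * μ x) (fun x _ =>
        mul_nonneg (mul_nonneg (neg_nonneg.2 (hh x)) (exp_pos _).le) (hμ x)) (mem_univ x₁)
    _ = -∑ x, h x * exp (2 * u x) * μ x := by simp only [neg_mul, sum_neg_distrib]

variable [DecidableEq V]

def dirichletEnergy (W : V → V → ℝ) (u : V → ℝ) : ℝ :=
  ∑ x, ∑ y ∈ univ.erase x, W x y * (u x - u y) ^ 2

def weightedLaplacian (W : V → V → ℝ) (u : V → ℝ) (x : V) : ℝ :=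
  ∑ y ∈ univ.erase x, W x y * (u x - u y)

def energy (μ : V → ℝ) (W : V → V → ℝ) (h : V → ℝ) (c lam : ℝ) (u : V → ℝ) : ℝ :=
  1 / 4 * dirichletEnergy W u - 1 / 2 * ∑ x, (h x + lam) * exp (2 * u x) * μ x
    + c * ∑ x, u x * μ x

lemma sum_sum_mul_sub_mul_sub {W : V → V → ℝ} (hW : ∀ x y, W x y = W y x) (u s : V → ℝ) :
    ∑ x, ∑ y ∈ univ.erase x, W x y * (u x - u y) * (s x - s y)
      = 2 * ∑ x, s x * weightedLaplacian W u x := by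
  have hswap : ∑ x, ∑ y, W x y * (u x - u y) * s y = -∑ x, ∑ y, s x * (W x y * (u x - u y)) := by
    rw [sum_comm, ← sum_neg_distrib]
    refine sum_congr rfl fun x _ => ?_
    rw [← sum_neg_distrib]
    refine sum_congr rfl fun y _ => ?_
    rw [hW]; ring
  simp only [weightedLaplacian, mul_sum]
  rw [sum_congr rfl fun x _ => sum_erase _ (by simp), sum_congr rfl fun x _ => sum_erase _ (by simp)]
  calc ∑ x, ∑ y, W x y * (u x - u y) * (s x - s y)
      = ∑ x, ∑ y, s x * (W x y * (u x - u y)) - ∑ x, ∑ y, W x y * (u x - u y) * s y := by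
        simp only [← sum_sub_distrib]
        exact sum_congr rfl fun x _ => sum_congr rfl fun y _ => by ring
    _ = ∑ x, ∑ y, 2 * (s x * (W x y * (u x - u y))) := by
        rw [hswap, sub_neg_eq_add, ← two_mul]
        simp only [mul_sum]

lemma hasLineDerivAt_dirichletEnergy {W : V → V → ℝ} (hW : ∀ x y, W x y = W y x)
    (u s : V → ℝ) :
    HasLineDerivAt ℝ (dirichletEnergy W) (4 * ∑ x, s x * weightedLaplacian W u x) u s := by
  have hterm : HasLineDerivAt ℝ (dirichletEnergy W)
      (∑ x, ∑ y ∈ univ.erase x, W x y * (2 * (u x - u y) * (s x - s y))) u s :=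
    HasDerivAt.fun_sum fun x _ => HasDerivAt.fun_sum fun y _ => by
      simpa using (((hasDerivAt_add_smul_apply u s x).sub
        (hasDerivAt_add_smul_apply u s y)).pow 2).const_mul (W x y)
  convert hterm using 1
  have h2 : ∑ x, ∑ y ∈ univ.erase x, W x y * (2 * (u x - u y) * (s x - s y))
      = 2 * ∑ x, ∑ y ∈ univ.erase x, W x y * (u x - u y) * (s x - s y) := by
    simp only [mul_sum]
    exact sum_congr rfl fun x _ => sum_congr rfl fun y _ => by ring
  rw [h2, sum_sum_mul_sub_mul_sub hW]
  ring

lemma hasLineDerivAt_energy (μ : V → ℝ) {W : V → V → ℝ} (hW : ∀ x y, W x y = W y x)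
    (h : V → ℝ) (c lam : ℝ) (u s : V → ℝ) :
    HasLineDerivAt ℝ (energy μ W h c lam)
      (∑ x, s x * (weightedLaplacian W u x - (h x + lam) * exp (2 * u x) * μ x + c * μ x))
      u s := by
  have hexp : HasDerivAt (fun t : ℝ => ∑ x, (h x + lam) * exp (2 * (u + t • s) x) * μ x)
      (∑ x, (h x + lam) * (exp (2 * u x) * (2 * s x)) * μ x) 0 :=
    HasDerivAt.fun_sum fun x _ => by
      simpa using ((((hasDerivAt_add_smul_apply u s x).const_mul 2).exp).const_mul
        (h x + lam)).mul_const (μ x)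
  have hlin : HasDerivAt (fun t : ℝ => ∑ x, (u + t • s) x * μ x) (∑ x, s x * μ x) 0 :=
    HasDerivAt.fun_sum fun x _ => (hasDerivAt_add_smul_apply u s x).mul_const (μ x)
  unfold HasLineDerivAt
  convert (((hasLineDerivAt_dirichletEnergy hW u s).const_mul (1 / 4)).fun_sub
    (hexp.const_mul (1 / 2))).fun_add (hlin.const_mul c) using 1
  · ext t; simp only [energy, mul_sum]
  · simp only [mul_sum, ← sum_sub_distrib, ← sum_add_distrib]
    exact sum_congr rfl fun x _ => by ring

lemma IsLocalMin.weightedLaplacian_eq {μ : V → ℝ} {W : V → V → ℝ} (hW : ∀ x y, W x y = W y x)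
    {h : V → ℝ} {c lam : ℝ} {u : V → ℝ} (hu : IsLocalMin (energy μ W h c lam) u) (x : V) :
    weightedLaplacian W u x = (h x + lam) * exp (2 * u x) * μ x - c * μ x := by
  have := hu.hasLineDerivAt_eq_zero (hasLineDerivAt_energy μ hW h c lam u (Pi.single x 1))
  simp only [Pi.single_apply, ite_mul, one_mul, zero_mul, sum_ite_eq', mem_univ, if_true] at this
  linarith

lemma exists_pos_le_of_ne [Nonempty V] {W : V → V → ℝ} (hW : ∀ x y, x ≠ y → 0 < W x y) :
    ∃ w > 0, ∀ x y, x ≠ y → w ≤ W x y := by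
  obtain ⟨p, hp⟩ := Finite.exists_min fun p : V × V => if p.1 = p.2 then 1 else W p.1 p.2
  refine ⟨if p.1 = p.2 then 1 else W p.1 p.2, ?_, fun x y hxy => by simpa [hxy] using hp (x, y)⟩
  split_ifs with hp'
  exacts [one_pos, hW _ _ hp']

lemma mul_sq_sub_le_dirichletEnergy {W : V → V → ℝ} {w : ℝ} (hw : 0 ≤ w)
    (hwW : ∀ x y, x ≠ y → w ≤ W x y) (u : V → ℝ) (x y : V) :
    w * (u x - u y) ^ 2 ≤ dirichletEnergy W u := by
  have hterm : ∀ x, ∀ y ∈ univ.erase x, 0 ≤ W x y * (u x - u y) ^ 2 := fun x y hy =>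
    mul_nonneg (hw.trans (hwW x y (ne_of_mem_erase hy).symm)) (sq_nonneg _)
  have hsum : ∀ x, 0 ≤ ∑ y ∈ univ.erase x, W x y * (u x - u y) ^ 2 :=
    fun x => sum_nonneg (hterm x)
  rcases eq_or_ne x y with rfl | hxy
  · rw [sub_self, zero_pow two_ne_zero, mul_zero]
    exact sum_nonneg fun x _ => hsum x
  calc w * (u x - u y) ^ 2 ≤ W x y * (u x - u y) ^ 2 := by gcongr; exact hwW x y hxy
    _ ≤ ∑ y ∈ univ.erase x, W x y * (u x - u y) ^ 2 :=
      single_le_sum (hterm x) (mem_erase.2 ⟨hxy.symm, mem_univ y⟩)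
    _ ≤ dirichletEnergy W u := single_le_sum (fun x _ => hsum x) (mem_univ x)

lemma exists_mul_norm_sub_le_energy [Nonempty V] {μ : V → ℝ} (hμ : ∀ x, 0 < μ x)
    {W : V → V → ℝ} (hW : ∀ x y, x ≠ y → 0 < W x y) {h : V → ℝ} (hh : ∀ x, h x ≤ 0)
    (hh0 : h ≠ 0) {c : ℝ} (hc : c < 0) :
    ∃ k > 0, ∃ C, ∀ u : V → ℝ, k * ‖u‖ - C ≤ energy μ W h c 0 u := by
  obtain ⟨x₁, hx₁⟩ : ∃ x, h x < 0 := by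
    by_contra! H
    exact hh0 (funext fun x => le_antisymm (hh x) (H x))
  obtain ⟨w, hw, hwW⟩ := exists_pos_le_of_ne hW
  set k := -c * ∑ x, μ x
  have hk : 0 < k := mul_pos (neg_pos.2 hc) (sum_pos (fun x _ => hμ x) univ_nonempty)
  have hβ : 0 < -h x₁ * μ x₁ / 2 := div_pos (mul_pos (neg_pos.2 hx₁) (hμ x₁)) two_pos
  obtain ⟨C, hC⟩ := exists_mul_abs_sub_le_mul_exp_sub hβ hk
  refine ⟨k, hk, C + 4 * k ^ 2 / w, fun u => ?_⟩
  obtain ⟨a, -, ha⟩ := exists_max_image univ u univ_nonempty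
  obtain ⟨b, -, hb⟩ := exists_min_image univ u univ_nonempty
  have hnorm : ‖u‖ ≤ |u b| + (u a - u b) := by
    refine (pi_norm_le_iff_of_nonneg ?_).2 fun x => ?_
    · linarith [abs_nonneg (u b), ha b (mem_univ _)]
    rw [Real.norm_eq_abs, abs_le]
    constructor <;>
      linarith [neg_abs_le (u b), le_abs_self (u b), ha x (mem_univ _), hb x (mem_univ _)]
  have hD := mul_sq_sub_le_dirichletEnergy hw.le hwW u a b
  have hexp := mul_exp_le_neg_sum_mul_exp (fun x => (hμ x).le) hh u (hb x₁ (mem_univ _))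
  have hlin : -k * u a ≤ c * ∑ x, u x * μ x :=
    calc -k * u a = c * ∑ x, u a * μ x := by rw [← mul_sum]; ring
      _ ≤ c * ∑ x, u x * μ x := mul_le_mul_of_nonpos_left
          (sum_le_sum fun x _ => mul_le_mul_of_nonneg_right (ha x (mem_univ _)) (hμ x).le) hc.le
  have hquad : w / 4 * (u a - u b - 4 * k / w) ^ 2
      = w / 4 * (u a - u b) ^ 2 - 2 * k * (u a - u b) + 4 * k ^ 2 / w := by
    field_simp; ring
  have hCb := hC (u b)
  have hnormk := mul_le_mul_of_nonneg_left hnorm hk.le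
  have hsq : 0 ≤ w / 4 * (u a - u b - 4 * k / w) ^ 2 := by positivity
  simp only [energy, add_zero]
  linarith

lemma energy_eq_energy_zero_sub (μ : V → ℝ) (W : V → V → ℝ) (h : V → ℝ) (c lam : ℝ)
    (u : V → ℝ) :
    energy μ W h c lam u = energy μ W h c 0 u - lam / 2 * ∑ x, exp (2 * u x) * μ x := by
  simp only [energy, add_zero, add_mul, sum_add_distrib, mul_assoc, ← mul_sum]
  ring

lemma exists_isLocalMin_energy [Nonempty V] {μ : V → ℝ} (hμ : ∀ x, 0 < μ x)
    {W : V → V → ℝ} (hW : ∀ x y, x ≠ y → 0 < W x y) {h : V → ℝ} (hh : ∀ x, h x ≤ 0)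
    (hh0 : h ≠ 0) {c : ℝ} (hc : c < 0) :
    ∃ lam₀ > 0, ∀ lam, 0 < lam → lam < lam₀ → ∃ u, IsLocalMin (energy μ W h c lam) u := by
  obtain ⟨k, hk, C, hC⟩ := exists_mul_norm_sub_le_energy hμ hW hh hh0 hc
  have hM : 0 < ∑ x, μ x := sum_pos (fun x _ => hμ x) univ_nonempty
  set R := (energy μ W h c 0 0 + 1 + C) / k
  have hkR : k * R = energy μ W h c 0 0 + 1 + C := mul_div_cancel₀ _ hk.ne'
  have hR : 0 < R := by
    have hC0 := hC 0
    rw [norm_zero, mul_zero] at hC0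
    exact div_pos (by linarith) hk
  refine ⟨2 / ((∑ x, μ x) * exp (2 * R)), by positivity, fun lam hlam hlam₀ => ?_⟩
  have hsphere : ∀ v ∈ Metric.sphere 0 R, energy μ W h c lam 0 < energy μ W h c lam v := by
    intro v hv
    rw [mem_sphere_zero_iff_norm] at hv
    have hbound := sum_exp_mul_le (fun x => (hμ x).le) v
    rw [hv] at hbound
    have hsmall : lam / 2 * (exp (2 * R) * ∑ x, μ x) < 1 := by
      rw [lt_div_iff₀ (by positivity)] at hlam₀
      linarith
    have hCv := hC v
    rw [hv] at hCv
    rw [energy_eq_energy_zero_sub μ W h c lam 0, energy_eq_energy_zero_sub μ W h c lam v]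
    simp only [Pi.zero_apply, mul_zero, exp_zero, one_mul]
    linarith [mul_le_mul_of_nonneg_left hbound (by positivity : (0 : ℝ) ≤ lam / 2),
      mul_pos (half_pos hlam) hM]
  have hcont : Continuous (energy μ W h c lam) := by unfold energy dirichletEnergy; fun_prop
  obtain ⟨u, -, hu⟩ := Metric.exists_isLocalMin_mem_ball hcont.continuousOn
    (Metric.mem_closedBall_self hR.le) hsphere
  exact ⟨u, hu⟩

end

theorem stmt_11_general {V : Type*} [Fintype V] [Nonempty V] [DecidableEq V]
    (μ : V → ℝ) (hμ : ∀ x, 0 < μ x)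
    (W : V → V → ℝ) (hWsym : ∀ x y, W x y = W y x)
    (hWpos : ∀ x y, x ≠ y → 0 < W x y)
    (L : (V → ℝ) → (V → ℝ))
    (hL : ∀ u x, L u x = (1 / μ x) * ∑ y ∈ Finset.univ.erase x, W x y * (u x - u y))
    (c : ℝ) (hc : c < 0)
    (h : V → ℝ) (hh0 : h ≠ 0) (hhle : ∀ x, h x ≤ 0)
    (J : ℝ → (V → ℝ) → ℝ)
    (hJ : ∀ lam u, J lam u =
      (1 / 4) * ∑ x : V, ∑ y ∈ Finset.univ.erase x, W x y * (u x - u y) ^ 2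
      - (1 / 2) * ∑ x : V, (h x + lam) * Real.exp (2 * u x) * μ x
      + c * ∑ x : V, u x * μ x) :
    ∃ lam₀ : ℝ, 0 < lam₀ ∧ ∀ lam : ℝ, 0 < lam → lam < lam₀ →
      ∃ u : V → ℝ, IsLocalMin (J lam) u ∧
        ∀ x, L u x = (h x + lam) * Real.exp (2 * u x) - c := by
  obtain ⟨lam₀, hlam₀, hmin⟩ := exists_isLocalMin_energy hμ hWpos hhle hh0 hc
  refine ⟨lam₀, hlam₀, fun lam hlam hlt => ?_⟩
  obtain ⟨u, hu⟩ := hmin lam hlam hlt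
  have hJlam : J lam = energy μ W h c lam := funext (hJ lam)
  refine ⟨u, hJlam ▸ hu, fun x => ?_⟩
  rw [hL, ← weightedLaplacian, hu.weightedLaplacian_eq hWsym x]
  field_simp [(hμ x).ne']

/-- Existence of a local minimum solution for small positive `λ`:
there is `λ₀ > 0` such that for all `λ ∈ (0, λ₀)` the functional `J_λ`
has a local minimum point `u_λ`, which solves `L u = (h + λ) e^{2u} - c`.
(For finite `V` the product topology on `V → ℝ` coincides with the
sup-norm topology.) -/
theorem stmt_11 {V : Type*} [Fintype V] [Nonempty V] [DecidableEq V]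
    (μ : V → ℝ) (hμ : ∀ x, 0 < μ x)
    (W : V → V → ℝ) (hWsym : ∀ x y, W x y = W y x)
    (hWpos : ∀ x y, x ≠ y → 0 < W x y)
    (L : (V → ℝ) → (V → ℝ))
    (hL : ∀ u x, L u x = (1 / μ x) * ∑ y ∈ Finset.univ.erase x, W x y * (u x - u y))
    (c : ℝ) (hc : c < 0)
    (h : V → ℝ) (hh0 : h ≠ 0) (hhle : ∀ x, h x ≤ 0) (hhmax : ∃ x, h x = 0)
    (J : ℝ → (V → ℝ) → ℝ)
    (hJ : ∀ lam u, J lam u =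
      (1 / 4) * ∑ x : V, ∑ y ∈ Finset.univ.erase x, W x y * (u x - u y) ^ 2
      - (1 / 2) * ∑ x : V, (h x + lam) * Real.exp (2 * u x) * μ x
      + c * ∑ x : V, u x * μ x) :
    ∃ lam₀ : ℝ, 0 < lam₀ ∧ ∀ lam : ℝ, 0 < lam → lam < lam₀ →
      ∃ u : V → ℝ, IsLocalMin (J lam) u ∧
        ∀ x, L u x = (h x + lam) * Real.exp (2 * u x) - c :=
  stmt_11_general μ hμ W hWsym hWpos L hL c hc h hh0 hhle J hJ
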